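/- Let G be the graph with vertices v_1, …, v_6 and edges e_1 = v_1v_2, e_2 = v_2v_3, e_3 = v_3v_4, e_4 = v_4v_5, e_5 = v_5v_1, e_6 = v_1v_6, e_7 = v_3v_6 (a 5-cycle and a 4-cycle glued along the path v_1 v_2 v_3). Then the element (1, 1, 1, 2, 1, 1, 1, 3) of ℤ^E × ℤ (coordinates ordered e_1, …, e_7, then the last coordinate) lies in int(M_G), and m(G) = 3. (Equivalently, reg K[C_5 #_{P_2} C_4] = 5.) -/

import Mathlib

/-! Basic definitions for cut monoids of finite simple graphs. -/

open Classical in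
/-- The cut vector of a vertex set `A`, as a function on `Sym2 V`:
value `1` on pairs with exactly one element in `A`, and `0` otherwise. -/
noncomputable def cutVec {V : Type} (A : Set V) : Sym2 V → ℤ :=
  Sym2.lift ⟨fun v w => if ((v ∈ A) ↔ (w ∈ A)) then 0 else 1,
    fun v w => if_congr iff_comm rfl rfl⟩

variable {V : Type}

/-- The generators `(δ_A, 1)` of the cut monoid of `G`. -/
def cutGens (G : SimpleGraph V) : Set ((G.edgeSet → ℤ) × ℤ) :=
  {p | ∃ A : Set V, p = (fun e => cutVec A e.1, 1)}

/-- The cut monoid `M_G` of a graph `G`. -/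
def cutMonoid (G : SimpleGraph V) : AddSubmonoid ((G.edgeSet → ℤ) × ℤ) :=
  AddSubmonoid.closure (cutGens G)

/-- The group `gp(M_G)` generated by the cut monoid. -/
def cutGroup (G : SimpleGraph V) : AddSubgroup ((G.edgeSet → ℤ) × ℤ) :=
  AddSubgroup.closure (cutGens G)

/-- `M_G` is normal: every `x ∈ gp(M_G)` with `n • x ∈ M_G` for some `n ≥ 1` lies in `M_G`. -/
def CutNormal (G : SimpleGraph V) : Prop :=
  ∀ x ∈ cutGroup G, (∃ n : ℕ, 1 ≤ n ∧ n • x ∈ cutMonoid G) → x ∈ cutMonoid G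

/-- `M_G` is seminormal: every `x ∈ gp(M_G)` with `2 • x ∈ M_G` and `3 • x ∈ M_G`
lies in `M_G`. -/
def CutSeminormal (G : SimpleGraph V) : Prop :=
  ∀ x ∈ cutGroup G, 2 • x ∈ cutMonoid G → 3 • x ∈ cutMonoid G → x ∈ cutMonoid G

/-- Generators of the cone of `M_G`: nonnegative real multiples of the `(δ_A, 1)`. -/
noncomputable def cutConeGens (G : SimpleGraph V) : Set ((G.edgeSet → ℝ) × ℝ) :=
  {q | ∃ (c : ℝ) (A : Set V), 0 ≤ c ∧
    q = c • ((fun e => ((cutVec A e.1 : ℤ) : ℝ), (1 : ℝ)))}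

/-- The cone `cone(M_G)`: all finite nonnegative real combinations of the `(δ_A, 1)`. -/
noncomputable def cutCone (G : SimpleGraph V) : Set ((G.edgeSet → ℝ) × ℝ) :=
  (AddSubmonoid.closure (cutConeGens G) : Set ((G.edgeSet → ℝ) × ℝ))

/-- The canonical map from `ℤ^E × ℤ` to `ℝ^E × ℝ`. -/
noncomputable def toRealCut (G : SimpleGraph V) (p : (G.edgeSet → ℤ) × ℤ) :
    (G.edgeSet → ℝ) × ℝ :=
  (fun e => ((p.1 e : ℤ) : ℝ), ((p.2 : ℤ) : ℝ))

/-- `int(M_G)`: elements of `M_G` mapping into the topological interior of `cone(M_G)`. -/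
noncomputable def cutInterior (G : SimpleGraph V) : Set ((G.edgeSet → ℤ) × ℤ) :=
  {p | p ∈ cutMonoid G ∧ toRealCut G p ∈ interior (cutCone G)}

/-- The set of last coordinates `α ∈ ℕ` realized by elements of `int(M_G)`;
its least element is `m(G)`. -/
noncomputable def cutDegrees (G : SimpleGraph V) : Set ℕ :=
  {α | ∃ x : G.edgeSet → ℤ, ((x, (α : ℤ)) : (G.edgeSet → ℤ) × ℤ) ∈ cutInterior G}

/-- `H` is a minor of `G`: branch sets `B u` are nonempty, pairwise disjoint,
induce connected subgraphs, and edges of `H` are witnessed by edges of `G`. -/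
def GraphMinor {W V : Type} (H : SimpleGraph W) (G : SimpleGraph V) : Prop :=
  ∃ B : W → Set V,
    (∀ u, (B u).Nonempty) ∧
    (∀ u v, u ≠ v → Disjoint (B u) (B v)) ∧
    (∀ u, (G.induce (B u)).Connected) ∧
    (∀ u v, H.Adj u v → ∃ a ∈ B u, ∃ b ∈ B v, G.Adj a b)

/-- `G` is `K₅`-minor-free. -/
def K5Free (G : SimpleGraph V) : Prop :=
  ¬ GraphMinor (⊤ : SimpleGraph (Fin 5)) G

/-- `G` is bipartite: vertices split into two parts so every edge joins the parts. -/
def BipartiteG (G : SimpleGraph V) : Prop :=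
  ∃ s : Set V, ∀ ⦃v w⦄, G.Adj v w → ((v ∈ s ∧ w ∉ s) ∨ (w ∈ s ∧ v ∉ s))

/-- `G` has an induced cycle of length `n` (n ≥ 3): an induced-subgraph copy of the
cycle graph of length `n`. -/
def HasInducedCycleLen (G : SimpleGraph V) (n : ℕ) : Prop :=
  3 ≤ n ∧ Nonempty (SimpleGraph.cycleGraph n ↪g G)

/-- `G` contains a triangle. -/
def HasTriangle (G : SimpleGraph V) : Prop :=
  ∃ a b c, G.Adj a b ∧ G.Adj b c ∧ G.Adj a c

/-- `G` is chordal: every induced cycle is a triangle. -/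
def ChordalG (G : SimpleGraph V) : Prop :=
  ∀ n, HasInducedCycleLen G n → n = 3

/-- `G` is bridgeless: every edge lies on some cycle. -/
def BridgelessG (G : SimpleGraph V) : Prop :=
  ∀ e ∈ G.edgeSet, ∃ (v : V) (c : G.Walk v v), c.IsCycle ∧ e ∈ c.edges

/-- `G` is (isomorphic to) a cycle of length `n`. -/
def IsCycleOfLen (G : SimpleGraph V) (n : ℕ) : Prop :=
  3 ≤ n ∧ Nonempty (G ≃g SimpleGraph.cycleGraph n)

/-- `G` is a cycle. -/
def IsCycleGraph (G : SimpleGraph V) : Prop :=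
  ∃ n, IsCycleOfLen G n

/-- `G` is a `0`-sum of `G1` and `G2`: copies of `G1`, `G2` cover `G`,
overlap in exactly one vertex, and every edge comes from `G1` or `G2`. -/
def IsZeroSumDecomp {V1 V2 : Type} (G : SimpleGraph V) (G1 : SimpleGraph V1)
    (G2 : SimpleGraph V2) : Prop :=
  ∃ (f1 : V1 ↪ V) (f2 : V2 ↪ V),
    Set.range f1 ∪ Set.range f2 = Set.univ ∧
    (∃ v, Set.range f1 ∩ Set.range f2 = {v}) ∧
    (∀ a b, G.Adj a b ↔
      ((∃ x y, f1 x = a ∧ f1 y = b ∧ G1.Adj x y) ∨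
       (∃ x y, f2 x = a ∧ f2 y = b ∧ G2.Adj x y)))

/-- `G` is a `1`-sum of `G1` and `G2` along a common edge. -/
def IsOneSumDecomp {V1 V2 : Type} (G : SimpleGraph V) (G1 : SimpleGraph V1)
    (G2 : SimpleGraph V2) : Prop :=
  ∃ (f1 : V1 ↪ V) (f2 : V2 ↪ V) (v w : V),
    v ≠ w ∧
    Set.range f1 ∪ Set.range f2 = Set.univ ∧
    Set.range f1 ∩ Set.range f2 = {v, w} ∧
    (∃ x y, f1 x = v ∧ f1 y = w ∧ G1.Adj x y) ∧
    (∃ x y, f2 x = v ∧ f2 y = w ∧ G2.Adj x y) ∧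
    (∀ a b, G.Adj a b ↔
      ((∃ x y, f1 x = a ∧ f1 y = b ∧ G1.Adj x y) ∨
       (∃ x y, f2 x = a ∧ f2 y = b ∧ G2.Adj x y)))

/-- Ring graphs: obtained, up to adding isolated vertices, from finitely many
(finite) trees and cycles by iterated `0`-sums and `1`-sums. -/
inductive IsRingGraph : {V : Type} → SimpleGraph V → Prop
  | tree {V : Type} (G : SimpleGraph V) :
      Finite V → G.Connected → G.IsAcyclic → IsRingGraph G
  | cycle {V : Type} (G : SimpleGraph V) : IsCycleGraph G → IsRingGraph G
  | zeroSum {V1 V2 V : Type} {G1 : SimpleGraph V1} {G2 : SimpleGraph V2}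
      {G : SimpleGraph V} :
      IsRingGraph G1 → IsRingGraph G2 → IsZeroSumDecomp G G1 G2 → IsRingGraph G
  | oneSum {V1 V2 V : Type} {G1 : SimpleGraph V1} {G2 : SimpleGraph V2}
      {G : SimpleGraph V} :
      IsRingGraph G1 → IsRingGraph G2 → IsOneSumDecomp G G1 G2 → IsRingGraph G
  | addIsolated {V W : Type} {G : SimpleGraph V} {H : SimpleGraph W} (f : V ↪ W) :
      IsRingGraph G → (∀ a b, H.Adj a b ↔ ∃ x y, f x = a ∧ f y = b ∧ G.Adj x y) →
      IsRingGraph H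

/-- An edge of an induced subgraph is an edge of the ambient graph. -/
lemma induce_edge_mem (G : SimpleGraph V) (s : Set V) (e : Sym2 s)
    (he : e ∈ (G.induce s).edgeSet) : e.map Subtype.val ∈ G.edgeSet := by
  induction e using Sym2.ind with
  | _ a b =>
    rw [Sym2.map_pair_eq, SimpleGraph.mem_edgeSet]
    exact he

/-- Restriction of a vector indexed by the edges of `G` to the edges of the
subgraph of `G` induced on `s`. -/
noncomputable def restrictCut (G : SimpleGraph V) (s : Set V) (p : G.edgeSet → ℤ) :
    (G.induce s).edgeSet → ℤ :=
  fun e => p ⟨e.1.map Subtype.val, induce_edge_mem G s e.1 e.2⟩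

/-- The graph `C₅ #_{P₂} C₄`: a `5`-cycle `v₁…v₅` and a `4`-cycle `v₁ v₂ v₃ v₆`
glued along the path `v₁ v₂ v₃` (vertices `v₁,…,v₆` are `0,…,5`). -/
def GC5C4 : SimpleGraph (Fin 6) :=
  SimpleGraph.fromEdgeSet
    {s(0, 1), s(1, 2), s(2, 3), s(3, 4), s(4, 0), s(0, 5), s(2, 5)}

/-!
Every cut meets a closed walk in an even number of edges, so the coordinates of any element of
`M_G` have even sum along the 5-cycle `v₁ … v₅`. The cone satisfies `0 ≤ x_e ≤ α` for every
edge `e`, so an interior point `(x, α)` has `0 < x_e < α`; for `α ≤ 2` this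
forces `x_e = 1` on the 5-cycle, an odd sum, whence `m(G) ≥ 3`.

Conversely `(1,1,1,2,1,1,1; 3) = (δ_{v₄}, 1) + (δ_{v₅}, 1) + (δ_{v₂v₆}, 1)` lies in `M_G`, and it
is a strictly positive combination of eight linearly independent generators, so a neighbourhood
of it (where the coordinates stay positive) lies in the cone.
-/

section CutVectors

variable {G : SimpleGraph V}

open Classical in
theorem cutVec_mk (A : Set V) (a b : V) :
    cutVec A s(a, b) = if (a ∈ A ↔ b ∈ A) then 0 else 1 := rfl

theorem cutVec_eq_zero_or_one (A : Set V) (e : Sym2 V) : cutVec A e = 0 ∨ cutVec A e = 1 := by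
  induction e using Sym2.ind with
  | _ a b => rw [cutVec_mk]; split <;> simp

theorem cutVec_nonneg (A : Set V) (e : Sym2 V) : 0 ≤ cutVec A e := by
  rcases cutVec_eq_zero_or_one A e with h | h <;> simp [h]

theorem cutVec_le_one (A : Set V) (e : Sym2 V) : cutVec A e ≤ 1 := by
  rcases cutVec_eq_zero_or_one A e with h | h <;> simp [h]

theorem cutVec_add_cutVec_modEq (A : Set V) (a b c : V) :
    cutVec A s(a, b) + cutVec A s(b, c) ≡ cutVec A s(a, c) [ZMOD 2] := by
  simp only [cutVec_mk]
  by_cases ha : a ∈ A <;> by_cases hb : b ∈ A <;> by_cases hc : c ∈ A <;> simp [ha, hb, hc]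

theorem cutVec_sum_darts_modEq (A : Set V) {u v : V} (w : G.Walk u v) :
    (w.darts.map fun d => cutVec A d.edge).sum ≡ cutVec A s(u, v) [ZMOD 2] := by
  induction w with
  | nil => simp [cutVec_mk]
  | @cons a b c _ p ih =>
    simp only [SimpleGraph.Walk.darts_cons, List.map_cons, List.sum_cons]
    exact ((Int.ModEq.refl _).add ih).trans (cutVec_add_cutVec_modEq A a b c)

def walkSum {u v : V} (w : G.Walk u v) (x : G.edgeSet → ℤ) : ℤ :=
  (w.darts.map fun d => x ⟨d.edge, d.edge_mem⟩).sum

theorem walkSum_add {u v : V} (w : G.Walk u v) (x y : G.edgeSet → ℤ) :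
    walkSum w (x + y) = walkSum w x + walkSum w y := by
  simp [walkSum, List.sum_map_add]

theorem even_walkSum_of_mem_cutMonoid {u : V} (w : G.Walk u u) {p : (G.edgeSet → ℤ) × ℤ}
    (hp : p ∈ cutMonoid G) : Even (walkSum w p.1) := by
  induction hp using AddSubmonoid.closure_induction with
  | mem p hp =>
    obtain ⟨A, rfl⟩ := hp
    refine even_iff_two_dvd.2 (Int.modEq_zero_iff_dvd.1 ?_)
    have h := cutVec_sum_darts_modEq A w
    rwa [cutVec_mk, if_pos Iff.rfl] at h
  | zero => simp [walkSum]
  | add p q _ _ hp hq => simpa [walkSum_add] using hp.add hq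

end CutVectors

theorem pos_of_mem_interior_of_nonneg {E : Type*} [AddCommGroup E] [TopologicalSpace E]
    [ContinuousAdd E] [Module ℝ E] [ContinuousSMul ℝ E] (f : StrongDual ℝ E) (hf : f ≠ 0)
    {s : Set E} (hs : ∀ x ∈ s, 0 ≤ f x) {p : E} (hp : p ∈ interior s) : 0 < f p := by
  have h : f '' interior s ⊆ interior (Set.Ici 0) :=
    interior_maximal (Set.image_subset_iff.2 fun x hx => hs x (interior_subset hx))
      (f.isOpenMap_of_ne_zero hf _ isOpen_interior)
  rw [interior_Ici] at h
  exact h ⟨p, hp, rfl⟩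

theorem mem_interior_of_forall_coord_pos {E ι : Type*} [AddCommMonoid E] [Module ℝ E]
    [TopologicalSpace E] [Fintype ι] {C : AddSubmonoid E} (g : ι → E)
    (hg : ∀ i, ∀ t : ℝ, 0 ≤ t → t • g i ∈ C) (c : E → ι → ℝ) (hc : Continuous c)
    (hsum : ∀ r, ∑ i, c r i • g i = r) {p : E} (hp : ∀ i, 0 < c p i) :
    p ∈ interior (C : Set E) := by
  refine interior_maximal (t := c ⁻¹' Set.univ.pi fun _ => Set.Ioi 0) ?_ ?_
    (Set.mem_preimage.2 (Set.mem_univ_pi.2 hp))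
  · intro r hr
    rw [← hsum r]
    exact C.sum_mem fun i _ => hg i _ (hr i (Set.mem_univ i)).le
  · exact (isOpen_set_pi Set.finite_univ fun _ _ => isOpen_Ioi).preimage hc

section CutCone

noncomputable def cutPoint (G : SimpleGraph V) (A : Set V) : (G.edgeSet → ℝ) × ℝ :=
  (fun e => (cutVec A e.1 : ℝ), 1)

variable {G : SimpleGraph V}

theorem nonneg_of_mem_cutCone (f : ((G.edgeSet → ℝ) × ℝ) →ₗ[ℝ] ℝ)
    (hf : ∀ A : Set V, 0 ≤ f (cutPoint G A)) {r : (G.edgeSet → ℝ) × ℝ}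
    (hr : r ∈ cutCone G) : 0 ≤ f r := by
  induction hr using AddSubmonoid.closure_induction with
  | mem r hr =>
    obtain ⟨c, A, hc, rfl⟩ := hr
    rw [map_smul]
    exact smul_nonneg hc (hf A)
  | zero => simp
  | add r s _ _ hr hs => rw [map_add]; exact add_nonneg hr hs

theorem pos_of_mem_interior_cutCone (f : StrongDual ℝ ((G.edgeSet → ℝ) × ℝ)) (hf₀ : f ≠ 0)
    (hf : ∀ A : Set V, 0 ≤ f (cutPoint G A)) {r : (G.edgeSet → ℝ) × ℝ}
    (hr : r ∈ interior (cutCone G)) : 0 < f r :=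
  pos_of_mem_interior_of_nonneg f hf₀ (fun _ h => nonneg_of_mem_cutCone f.toLinearMap hf h) hr

theorem fst_pos_of_mem_interior_cutCone {r : (G.edgeSet → ℝ) × ℝ}
    (hr : r ∈ interior (cutCone G)) (e : G.edgeSet) : 0 < r.1 e :=
  pos_of_mem_interior_cutCone ((ContinuousLinearMap.proj e).comp (.fst ℝ _ ℝ))
    (DFunLike.ne_iff.2 ⟨(1, 0), by simp⟩) (fun A => by simpa [cutPoint] using cutVec_nonneg A e.1)
    hr

theorem fst_lt_snd_of_mem_interior_cutCone {r : (G.edgeSet → ℝ) × ℝ}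
    (hr : r ∈ interior (cutCone G)) (e : G.edgeSet) : r.1 e < r.2 := by
  have := pos_of_mem_interior_cutCone
    (.snd ℝ _ ℝ - (ContinuousLinearMap.proj e).comp (.fst ℝ _ ℝ))
    (DFunLike.ne_iff.2 ⟨(0, 1), by simp⟩)
    (fun A => by simpa [cutPoint] using (Int.cast_le (R := ℝ)).2 (cutVec_le_one A e.1)) hr
  simpa using this

theorem pos_and_lt_snd_of_toRealCut_mem_interior {p : (G.edgeSet → ℤ) × ℤ}
    (hp : toRealCut G p ∈ interior (cutCone G)) (e : G.edgeSet) : 0 < p.1 e ∧ p.1 e < p.2 := by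
  have h₀ := fst_pos_of_mem_interior_cutCone hp e
  have h₁ := fst_lt_snd_of_mem_interior_cutCone hp e
  simp only [toRealCut, Int.cast_pos, Int.cast_lt] at h₀ h₁
  exact ⟨h₀, h₁⟩

end CutCone

namespace GC5C4

def e₁ : GC5C4.edgeSet := ⟨s(0, 1), by simp [GC5C4]⟩
def e₂ : GC5C4.edgeSet := ⟨s(1, 2), by simp [GC5C4]⟩
def e₃ : GC5C4.edgeSet := ⟨s(2, 3), by simp [GC5C4]⟩
def e₄ : GC5C4.edgeSet := ⟨s(3, 4), by simp [GC5C4]⟩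
def e₅ : GC5C4.edgeSet := ⟨s(4, 0), by simp [GC5C4]⟩
def e₆ : GC5C4.edgeSet := ⟨s(0, 5), by simp [GC5C4]⟩
def e₇ : GC5C4.edgeSet := ⟨s(2, 5), by simp [GC5C4]⟩

theorem edge_cases (e : GC5C4.edgeSet) :
    e = e₁ ∨ e = e₂ ∨ e = e₃ ∨ e = e₄ ∨ e = e₅ ∨ e = e₆ ∨ e = e₇ := by
  obtain ⟨e, he⟩ := e
  have hS := he
  rw [GC5C4, SimpleGraph.edgeSet_fromEdgeSet] at hS
  simp only [Set.mem_sdiff, Set.mem_insert_iff, Set.mem_singleton_iff] at hS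
  rcases hS.1 with rfl | rfl | rfl | rfl | rfl | rfl | rfl <;> simp [e₁, e₂, e₃, e₄, e₅, e₆, e₇]

def pentagon : GC5C4.Walk 0 0 :=
  .cons (by simp [GC5C4] : GC5C4.Adj 0 1) <| .cons (by simp [GC5C4] : GC5C4.Adj 1 2) <|
    .cons (by simp [GC5C4] : GC5C4.Adj 2 3) <| .cons (by simp [GC5C4] : GC5C4.Adj 3 4) <|
    .cons (by simp [GC5C4] : GC5C4.Adj 4 0) .nil

theorem walkSum_pentagon (x : GC5C4.edgeSet → ℤ) :
    walkSum pentagon x = x e₁ + x e₂ + x e₃ + x e₄ + x e₅ := by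
  show x e₁ + (x e₂ + (x e₃ + (x e₄ + (x e₅ + 0)))) = _
  ring

def cutBasis : Fin 8 → Set (Fin 6) :=
  ![∅, {3}, {1, 2, 3}, {0, 1, 2, 3}, {1, 4}, {0, 1, 4}, {0, 3, 4}, {2, 3, 4}]

/-- The coordinates of `r` in the basis `cutPoint GC5C4 ∘ cutBasis` of `ℝ^E × ℝ`: the rows of the
inverse of the matrix of these eight cut generators. -/
noncomputable def cutBasisCoords (r : (GC5C4.edgeSet → ℝ) × ℝ) : Fin 8 → ℝ :=
  let x := r.1
  ![(-x e₁ - 3 * x e₂ - 4 * x e₃ - 2 * x e₄ - x e₆ - 3 * x e₇ + 6 * r.2) / 6,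
    (-2 * x e₁ + 4 * x e₃ + 2 * x e₄ - 2 * x e₆) / 6,
    (2 * x e₁ - x e₃ + x e₄ - 3 * x e₅ - x e₆ + 3 * x e₇) / 6,
    (-x e₁ - 3 * x e₂ - x e₃ + x e₄ + 3 * x e₅ + 2 * x e₆) / 6,
    (2 * x e₁ - x e₃ + x e₄ + 3 * x e₅ - x e₆ - 3 * x e₇) / 6,
    (-x e₁ + 3 * x e₂ - x e₃ + x e₄ - 3 * x e₅ + 2 * x e₆) / 6,
    (2 * x e₁ + 2 * x e₃ - 2 * x e₄ + 2 * x e₆) / 6,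
    (-x e₁ + 3 * x e₂ + 2 * x e₃ - 2 * x e₄ - x e₆ + 3 * x e₇) / 6]

theorem continuous_cutBasisCoords : Continuous cutBasisCoords :=
  continuous_pi fun i => by fin_cases i <;> simp [cutBasisCoords] <;> fun_prop

theorem sum_cutBasisCoords_smul (r : (GC5C4.edgeSet → ℝ) × ℝ) :
    ∑ i, cutBasisCoords r i • cutPoint GC5C4 (cutBasis i) = r := by
  ext e
  · rcases edge_cases e with rfl | rfl | rfl | rfl | rfl | rfl | rfl <;>
      simp [Fin.sum_univ_succ, cutBasisCoords, cutBasis, cutPoint, cutVec_mk,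
        e₁, e₂, e₃, e₄, e₅, e₆, e₇] <;> ring
  · simp [Fin.sum_univ_succ, cutBasisCoords, cutPoint]
    ring

theorem toRealCut_mem_interior_cutCone {p : (GC5C4.edgeSet → ℤ) × ℤ}
    (hp : ∀ i, 0 < cutBasisCoords (toRealCut GC5C4 p) i) :
    toRealCut GC5C4 p ∈ interior (cutCone GC5C4) :=
  mem_interior_of_forall_coord_pos (C := AddSubmonoid.closure (cutConeGens GC5C4))
    (cutPoint GC5C4 ∘ cutBasis) (fun _ t ht => AddSubmonoid.subset_closure ⟨t, _, ht, rfl⟩)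
    cutBasisCoords continuous_cutBasisCoords sum_cutBasisCoords_smul hp

def interiorPoint : (GC5C4.edgeSet → ℤ) × ℤ :=
  (fun e => if e.1 = s(3, 4) then 2 else 1, 3)

theorem interiorPoint_eq :
    interiorPoint = (fun e => cutVec {3} e.1, 1) + (fun e => cutVec {4} e.1, 1) +
      (fun e => cutVec {1, 5} e.1, 1) := by
  ext e
  · rcases edge_cases e with rfl | rfl | rfl | rfl | rfl | rfl | rfl <;>
      simp [interiorPoint, cutVec_mk, e₁, e₂, e₃, e₄, e₅, e₆, e₇]
  · rfl

theorem interiorPoint_mem_cutInterior : interiorPoint ∈ cutInterior GC5C4 := by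
  refine ⟨?_, toRealCut_mem_interior_cutCone fun i => ?_⟩
  · rw [interiorPoint_eq]
    exact add_mem (add_mem (AddSubmonoid.subset_closure ⟨_, rfl⟩)
      (AddSubmonoid.subset_closure ⟨_, rfl⟩)) (AddSubmonoid.subset_closure ⟨_, rfl⟩)
  · fin_cases i <;>
      norm_num [cutBasisCoords, toRealCut, interiorPoint, e₁, e₂, e₃, e₄, e₅, e₆, e₇, Fin.ext_iff]

end GC5C4

/-- For `G = C₅ #_{P₂} C₄`, the element `(1,1,1,2,1,1,1,3)` lies in
`int(M_G)` and `m(G) = 3`. -/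
theorem c5_p2_c4_m :
    (((fun e => if e.1 = s((3 : Fin 6), (4 : Fin 6)) then (2 : ℤ) else 1, (3 : ℤ)) :
        (GC5C4.edgeSet → ℤ) × ℤ) ∈ cutInterior GC5C4) ∧
    IsLeast (cutDegrees GC5C4) 3 := by
  refine ⟨GC5C4.interiorPoint_mem_cutInterior, ⟨_, GC5C4.interiorPoint_mem_cutInterior⟩, ?_⟩
  rintro α ⟨x, hmem, hint⟩
  have hx : ∀ e, 0 < x e ∧ x e < α := pos_and_lt_snd_of_toRealCut_mem_interior hint
  obtain ⟨k, hk⟩ : Even (walkSum GC5C4.pentagon x) :=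
    even_walkSum_of_mem_cutMonoid GC5C4.pentagon hmem
  rw [GC5C4.walkSum_pentagon] at hk
  have := hx GC5C4.e₁; have := hx GC5C4.e₂; have := hx GC5C4.e₃
  have := hx GC5C4.e₄; have := hx GC5C4.e₅
  omega
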